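/- arXiv:1604.02132 — 3 statements merged into one kernel-verified Lean document; each statement's English description precedes it below -/
import Mathlib

section
/- Let ρ > 0, α ≥ 0 and C ≥ 0, and let f : [-ρ, ρ] → ℝ be a twice continuously differentiable positive function satisfying f''(σ) ≤ (α/2)·f(σ) for all σ ∈ [-ρ, ρ], together with the boundary conditions f'(-ρ) ≤ C·f(-ρ) and f'(ρ) ≥ -C·f(ρ). Then for all s, q ∈ [-ρ, ρ] one has f(q) ≤ f(s)·exp(2ρ(αρ + C)). -/
open Set

/-- If `f > 0` is twice continuously differentiable on `[-ρ, ρ]` with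
`f'' ≤ (α/2) f`, and the boundary conditions `f'(-ρ) ≤ C f(-ρ)` and `f'(ρ) ≥ -C f(ρ)`
hold, then `f q ≤ f s * exp (2ρ(αρ + C))` for all `s, q ∈ [-ρ, ρ]`. -/
theorem stmt_1 (ρ α C : ℝ) (hρ : 0 < ρ) (hα : 0 ≤ α) (hC : 0 ≤ C)
    (f f' f'' : ℝ → ℝ)
    (hder : ∀ σ ∈ Icc (-ρ) ρ, HasDerivWithinAt f (f' σ) (Icc (-ρ) ρ) σ)
    (hder' : ∀ σ ∈ Icc (-ρ) ρ, HasDerivWithinAt f' (f'' σ) (Icc (-ρ) ρ) σ)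
    (hcont : ContinuousOn f'' (Icc (-ρ) ρ))
    (hpos : ∀ σ ∈ Icc (-ρ) ρ, 0 < f σ)
    (hineq : ∀ σ ∈ Icc (-ρ) ρ, f'' σ ≤ (α / 2) * f σ)
    (hbl : f' (-ρ) ≤ C * f (-ρ))
    (hbr : -C * f ρ ≤ f' ρ) :
    ∀ s ∈ Icc (-ρ) ρ, ∀ q ∈ Icc (-ρ) ρ,
      f q ≤ f s * Real.exp (2 * ρ * (α * ρ + C)) := by
  intro s hs q hq
  set D : Set ℝ := Icc (-ρ) ρ with hD
  have hmem_l : (-ρ) ∈ D := by constructor <;> simp [le_of_lt hρ] <;> linarith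
  have hmem_r : ρ ∈ D := by constructor <;> simp [le_of_lt hρ] <;> linarith
  set φ : ℝ → ℝ := fun σ => f' σ / f σ with hφ
  -- derivative of φ
  have hφder : ∀ σ ∈ D, HasDerivWithinAt φ
      ((f'' σ * f σ - f' σ * f' σ) / (f σ)^2) D σ := by
    intro σ hσ
    exact (hder' σ hσ).div (hder σ hσ) (hpos σ hσ).ne'
  have hφderle : ∀ σ ∈ D, (f'' σ * f σ - f' σ * f' σ) / (f σ)^2 ≤ α / 2 := by
    intro σ hσ
    have hfpos := hpos σ hσ
    have h1 : f'' σ * f σ - f' σ * f' σ ≤ (α/2) * (f σ)^2 := by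
      have := hineq σ hσ
      nlinarith [sq_nonneg (f' σ)]
    rw [div_le_iff₀ (by positivity)]
    linarith
  -- ψ = φ - (α/2) σ is antitone on D
  set ψ : ℝ → ℝ := fun σ => φ σ - α/2 * σ with hψ
  have hψder : ∀ σ ∈ D, HasDerivWithinAt ψ
      ((f'' σ * f σ - f' σ * f' σ) / (f σ)^2 - α/2) D σ := by
    intro σ hσ
    exact (hφder σ hσ).sub (by simpa using (hasDerivWithinAt_id σ D).const_mul (α/2))
  have hψcont : ContinuousOn ψ D := fun σ hσ => (hψder σ hσ).continuousWithinAt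
  have hψanti : AntitoneOn ψ D := by
    have hconv : Convex ℝ D := convex_Icc _ _
    apply antitoneOn_of_deriv_nonpos hconv hψcont
    · intro x hx
      rw [interior_Icc] at hx
      exact ((hψder x (Ioo_subset_Icc_self hx)).hasDerivAt
        (Icc_mem_nhds hx.1 hx.2)).differentiableAt.differentiableWithinAt
    · intro x hx
      rw [interior_Icc] at hx
      have hx' : x ∈ D := Ioo_subset_Icc_self hx
      have := ((hψder x hx').hasDerivAt (Icc_mem_nhds hx.1 hx.2)).deriv
      rw [this]
      linarith [hφderle x hx']
  -- bound |φ| ≤ αρ + C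
  have hbound : ∀ σ ∈ D, |φ σ| ≤ α * ρ + C := by
    intro σ hσ
    have h1 := hσ.1; have h2 := hσ.2
    have hupper : ψ σ ≤ ψ (-ρ) := hψanti hmem_l hσ h1
    have hlower : ψ ρ ≤ ψ σ := hψanti hσ hmem_r h2
    have hφl : φ (-ρ) ≤ C := by
      rw [hφ]
      rw [div_le_iff₀ (hpos _ hmem_l)]
      exact hbl
    have hφr : -C ≤ φ ρ := by
      rw [hφ, le_div_iff₀ (hpos _ hmem_r)]
      exact hbr
    rw [abs_le]
    constructor
    · simp only [hψ] at hlower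
      nlinarith
    · simp only [hψ] at hupper
      nlinarith
  -- log f has derivative φ
  set L : ℝ → ℝ := fun σ => Real.log (f σ) with hL
  have hLder : ∀ σ ∈ D, HasDerivWithinAt L (φ σ) D σ := by
    intro σ hσ
    exact (hder σ hσ).log (hpos σ hσ).ne'
  have hconv : Convex ℝ D := convex_Icc _ _
  have hMVT : ‖L q - L s‖ ≤ (α * ρ + C) * ‖q - s‖ := by
    apply hconv.norm_image_sub_le_of_norm_hasDerivWithin_le
      (f' := φ) (fun σ hσ => hLder σ hσ) (fun σ hσ => by
        rw [Real.norm_eq_abs]; exact hbound σ hσ) hs hq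
  have hqs : ‖q - s‖ ≤ 2 * ρ := by
    rw [Real.norm_eq_abs, abs_le]
    obtain ⟨h1, h2⟩ := hs; obtain ⟨h3, h4⟩ := hq
    constructor <;> linarith
  have hLle : L q - L s ≤ 2 * ρ * (α * ρ + C) := by
    have h1 : L q - L s ≤ ‖L q - L s‖ := le_abs_self _
    have h2 : (α * ρ + C) * ‖q - s‖ ≤ (α * ρ + C) * (2 * ρ) := by
      apply mul_le_mul_of_nonneg_left hqs (by positivity)
    linarith
  have hfq := hpos q hq
  have hfs := hpos s hs
  calc f q = Real.exp (L q) := (Real.exp_log hfq).symm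
    _ ≤ Real.exp (L s + 2 * ρ * (α * ρ + C)) := by
        apply Real.exp_le_exp.mpr; linarith
    _ = f s * Real.exp (2 * ρ * (α * ρ + C)) := by
        rw [Real.exp_add, Real.exp_log hfs]
end

section
/- Let ρ > 0, α ≥ 0 and C ≥ 0, and let f : [-ρ, ρ] × ℝ → ℝ be a positive function, twice continuously differentiable, 2π-periodic in its second variable, satisfying for all (σ, θ) ∈ [-ρ, ρ] × ℝ the inequality ∂²f/∂σ²(σ, θ) ≤ (α/2)·f(σ, θ), and at the two ends the bounds |∂f/∂σ(-ρ, θ)| ≤ C·f(-ρ, θ) and |∂f/∂σ(ρ, θ)| ≤ C·f(ρ, θ). For s ∈ [-ρ, ρ] define L_s = ∫₀^{2π} f(s, θ) dθ. Then for all s, q ∈ [-ρ, ρ]: L_s·exp(-2ρ(αρ + C)) ≤ L_q ≤ L_s·exp(2ρ(αρ + C)). -/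
open Set intervalIntegral Real

/-!
Fix `θ` and write `g = f(·, θ)`. Since `(g'/g)' = g''/g - (g'/g)² ≤ α/2`, the function
`g'/g - (α/2)σ` is antitone, so the boundary bounds `|g'/g| ≤ C` at `σ = ±ρ` propagate inwards
to `|g'/g| ≤ C + αρ` on all of `[-ρ, ρ]`. Hence `log g` is `(C + αρ)`-Lipschitz, which compares
`f(q, θ)` with `f(s, θ)` up to the factor `exp (2ρ(C + αρ))`; integrating over `θ` compares the
lengths `L_q` and `L_s`.
-/

theorem antitoneOn_div_sub_mul_of_le_mul {S : Set ℝ} (hS : Convex ℝ S) {g g' g'' : ℝ → ℝ}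
    {k : ℝ} (hpos : ∀ x ∈ S, 0 < g x)
    (hg : ∀ x ∈ S, HasDerivWithinAt g (g' x) S x)
    (hg' : ∀ x ∈ S, HasDerivWithinAt g' (g'' x) S x)
    (hle : ∀ x ∈ S, g'' x ≤ k * g x) :
    AntitoneOn (fun x => g' x / g x - k * x) S := by
  have hderiv : ∀ x ∈ S, HasDerivWithinAt (fun x => g' x / g x - k * x)
      ((g'' x * g x - g' x * g' x) / g x ^ 2 - k * 1) S x := fun x hx =>
    ((hg' x hx).div (hg x hx) (hpos x hx).ne').sub ((hasDerivWithinAt_id x S).const_mul k)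
  refine antitoneOn_of_hasDerivWithinAt_nonpos hS
    (fun x hx => (hderiv x hx).continuousWithinAt)
    (fun x hx => (hderiv x (interior_subset hx)).mono interior_subset) fun x hx => ?_
  have hx := interior_subset hx
  have hgx := hpos x hx
  have : g'' x * g x - g' x * g' x ≤ k * g x ^ 2 := by
    nlinarith [mul_le_mul_of_nonneg_right (hle x hx) hgx.le, mul_self_nonneg (g' x)]
  rw [mul_one, sub_nonpos, div_le_iff₀ (by positivity)]
  exact this

theorem abs_le_of_antitoneOn_sub_mul {a b C k : ℝ} (hk : 0 ≤ k) {u : ℝ → ℝ}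
    (hanti : AntitoneOn (fun x => u x - k * x) (Icc a b)) (ha : u a ≤ C) (hb : -C ≤ u b)
    {x : ℝ} (hx : x ∈ Icc a b) : |u x| ≤ C + k * (b - a) := by
  have hab : a ≤ b := hx.1.trans hx.2
  have hleft := hanti (left_mem_Icc.2 hab) hx hx.1
  have hright := hanti hx (right_mem_Icc.2 hab) hx.2
  simp only at hleft hright
  rw [abs_le]
  constructor <;> nlinarith [hx.1, hx.2]

theorem le_mul_exp_mul_abs_sub {S : Set ℝ} (hS : Convex ℝ S) {g g' : ℝ → ℝ} {M : ℝ}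
    (hpos : ∀ x ∈ S, 0 < g x)
    (hg : ∀ x ∈ S, HasDerivWithinAt g (g' x) S x)
    (hM : ∀ x ∈ S, |g' x / g x| ≤ M) {s q : ℝ} (hs : s ∈ S) (hq : q ∈ S) :
    g q ≤ g s * exp (M * |q - s|) := by
  have hlog : ∀ x ∈ S, HasDerivWithinAt (fun x => log (g x)) (g' x / g x) S x :=
    fun x hx => (hg x hx).log (hpos x hx).ne'
  have hlip : ‖log (g q) - log (g s)‖ ≤ M * ‖q - s‖ :=
    hS.norm_image_sub_le_of_norm_hasDerivWithin_le hlog hM hs hq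
  rw [Real.norm_eq_abs, Real.norm_eq_abs] at hlip
  calc g q = exp (log (g q)) := (exp_log (hpos q hq)).symm
    _ ≤ exp (log (g s) + M * |q - s|) :=
        exp_le_exp.2 (by linarith [le_abs_self (log (g q) - log (g s))])
    _ = g s * exp (M * |q - s|) := by rw [exp_add, exp_log (hpos s hs)]

theorem le_mul_exp_of_deriv2_le_mul {a b C k : ℝ} (hk : 0 ≤ k) {g g' g'' : ℝ → ℝ}
    (hpos : ∀ x ∈ Icc a b, 0 < g x)
    (hg : ∀ x ∈ Icc a b, HasDerivWithinAt g (g' x) (Icc a b) x)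
    (hg' : ∀ x ∈ Icc a b, HasDerivWithinAt g' (g'' x) (Icc a b) x)
    (hle : ∀ x ∈ Icc a b, g'' x ≤ k * g x)
    (ha : |g' a| ≤ C * g a) (hb : |g' b| ≤ C * g b) {s q : ℝ}
    (hs : s ∈ Icc a b) (hq : q ∈ Icc a b) :
    g q ≤ g s * exp ((b - a) * (C + k * (b - a))) := by
  have hab : a ≤ b := hs.1.trans hs.2
  have ha' : g' a / g a ≤ C :=
    (div_le_iff₀ (hpos a (left_mem_Icc.2 hab))).2 ((le_abs_self _).trans ha)
  have hb' : -C ≤ g' b / g b := by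
    rw [le_div_iff₀ (hpos b (right_mem_Icc.2 hab))]
    linarith [neg_abs_le (g' b)]
  have hM : ∀ x ∈ Icc a b, |g' x / g x| ≤ C + k * (b - a) := fun x hx =>
    abs_le_of_antitoneOn_sub_mul hk
      (antitoneOn_div_sub_mul_of_le_mul (convex_Icc a b) hpos hg hg' hle) ha' hb' hx
  have hM0 : 0 ≤ C + k * (b - a) := (abs_nonneg _).trans (hM s hs)
  have hqs : |q - s| ≤ b - a := abs_sub_le_iff.2 ⟨by linarith [hq.2, hs.1], by linarith [hq.1, hs.2]⟩
  calc g q ≤ g s * exp ((C + k * (b - a)) * |q - s|) :=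
        le_mul_exp_mul_abs_sub (convex_Icc a b) hpos hg hM hs hq
    _ ≤ g s * exp ((b - a) * (C + k * (b - a))) := by
        rw [mul_comm (b - a)]
        gcongr
        exact (hpos s hs).le

theorem stmt_2_general (ρ α C : ℝ) (hα : 0 ≤ α)
    (f fσ fσσ : ℝ → ℝ → ℝ)
    (hpos : ∀ σ ∈ Icc (-ρ) ρ, ∀ θ : ℝ, 0 < f σ θ)
    (hder : ∀ θ : ℝ, ∀ σ ∈ Icc (-ρ) ρ,
      HasDerivWithinAt (fun x => f x θ) (fσ σ θ) (Icc (-ρ) ρ) σ)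
    (hder' : ∀ θ : ℝ, ∀ σ ∈ Icc (-ρ) ρ,
      HasDerivWithinAt (fun x => fσ x θ) (fσσ σ θ) (Icc (-ρ) ρ) σ)
    (hcont : ContinuousOn (fun p : ℝ × ℝ => f p.1 p.2) (Icc (-ρ) ρ ×ˢ univ))
    (hineq : ∀ σ ∈ Icc (-ρ) ρ, ∀ θ : ℝ, fσσ σ θ ≤ (α / 2) * f σ θ)
    (hbl : ∀ θ : ℝ, |fσ (-ρ) θ| ≤ C * f (-ρ) θ)
    (hbr : ∀ θ : ℝ, |fσ ρ θ| ≤ C * f ρ θ)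
    (L : ℝ → ℝ) (hL : ∀ s, L s = ∫ θ in (0:ℝ)..(2 * Real.pi), f s θ) :
    ∀ s ∈ Icc (-ρ) ρ, ∀ q ∈ Icc (-ρ) ρ,
      L s * Real.exp (-(2 * ρ * (α * ρ + C))) ≤ L q ∧
      L q ≤ L s * Real.exp (2 * ρ * (α * ρ + C)) := by
  have hslice : ∀ s ∈ Icc (-ρ) ρ, IntervalIntegrable (f s) MeasureTheory.volume 0 (2 * π) :=
    fun s hs => (hcont.comp_continuous (Continuous.prodMk_right s)
      fun θ => ⟨hs, mem_univ θ⟩).intervalIntegrable _ _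
  have hupper : ∀ s ∈ Icc (-ρ) ρ, ∀ q ∈ Icc (-ρ) ρ,
      L q ≤ L s * exp (2 * ρ * (α * ρ + C)) := by
    intro s hs q hq
    rw [hL, hL, ← integral_mul_const]
    refine integral_mono_on (by positivity) (hslice q hq) ((hslice s hs).mul_const _)
      fun θ _ => ?_
    convert le_mul_exp_of_deriv2_le_mul (by positivity) (fun σ hσ => hpos σ hσ θ) (hder θ)
      (hder' θ) (fun σ hσ => hineq σ hσ θ) (hbl θ) (hbr θ) hs hq using 3
    ring
  intro s hs q hq
  refine ⟨?_, hupper s hs q hq⟩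
  rw [exp_neg, ← div_eq_mul_inv, div_le_iff₀ (exp_pos _)]
  exact hupper q hq s hs

/-- For a positive, twice continuously differentiable function
`f(σ, θ)` on `[-ρ, ρ] × ℝ`, `2π`-periodic in `θ`, with `∂²f/∂σ² ≤ (α/2) f` and
`|∂f/∂σ| ≤ C f` at `σ = ±ρ`, the lengths `L_s = ∫₀^{2π} f(s, θ) dθ` of any two
parallels satisfy `L_s e^{-2ρ(αρ+C)} ≤ L_q ≤ L_s e^{2ρ(αρ+C)}`. -/
theorem stmt_2 (ρ α C : ℝ) (hρ : 0 < ρ) (hα : 0 ≤ α) (hC : 0 ≤ C)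
    (f fσ fσσ : ℝ → ℝ → ℝ)
    (hpos : ∀ σ ∈ Icc (-ρ) ρ, ∀ θ : ℝ, 0 < f σ θ)
    (hper : ∀ σ ∈ Icc (-ρ) ρ, ∀ θ : ℝ, f σ (θ + 2 * Real.pi) = f σ θ)
    (hder : ∀ θ : ℝ, ∀ σ ∈ Icc (-ρ) ρ,
      HasDerivWithinAt (fun x => f x θ) (fσ σ θ) (Icc (-ρ) ρ) σ)
    (hder' : ∀ θ : ℝ, ∀ σ ∈ Icc (-ρ) ρ,
      HasDerivWithinAt (fun x => fσ x θ) (fσσ σ θ) (Icc (-ρ) ρ) σ)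
    (hcont : ContinuousOn (fun p : ℝ × ℝ => f p.1 p.2) (Icc (-ρ) ρ ×ˢ univ))
    (hcont' : ContinuousOn (fun p : ℝ × ℝ => fσ p.1 p.2) (Icc (-ρ) ρ ×ˢ univ))
    (hcont'' : ContinuousOn (fun p : ℝ × ℝ => fσσ p.1 p.2) (Icc (-ρ) ρ ×ˢ univ))
    (hineq : ∀ σ ∈ Icc (-ρ) ρ, ∀ θ : ℝ, fσσ σ θ ≤ (α / 2) * f σ θ)
    (hbl : ∀ θ : ℝ, |fσ (-ρ) θ| ≤ C * f (-ρ) θ)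
    (hbr : ∀ θ : ℝ, |fσ ρ θ| ≤ C * f ρ θ)
    (L : ℝ → ℝ) (hL : ∀ s, L s = ∫ θ in (0:ℝ)..(2 * Real.pi), f s θ) :
    ∀ s ∈ Icc (-ρ) ρ, ∀ q ∈ Icc (-ρ) ρ,
      L s * Real.exp (-(2 * ρ * (α * ρ + C))) ≤ L q ∧
      L q ≤ L s * Real.exp (2 * ρ * (α * ρ + C)) :=
  stmt_2_general ρ α C hα f fσ fσσ hpos hder hder' hcont hineq hbl hbr L hL
end

section
/- Let A, h : [0, ∞) → ℝ be differentiable functions such that A is positive and nonincreasing, h is nondecreasing with h(0) = 1, and suppose there is a constant c₁ > 0 such that -A'(t)·h(t) = c₁ for all t ≥ 0. Then for every t ≥ 0 one has c₁·t ≤ h(t)·(A(0) - A(t)) ≤ h(t)·A(0); in particular -A'(t) ≤ A(0)/t for all t > 0. -/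
open Set

/-!
Since `h` is nondecreasing and `h 0 = 1`, `h` is positive, so `A' s = -c₁ / h s`. For `s ≤ t`
this gives `A' s ≤ -c₁ / h t`, and the mean value inequality on `[0, t]` yields
`A 0 - A t ≥ c₁ t / h t`. Positivity of `A t` bounds `A 0 - A t` by `A 0`, and dividing
`c₁ t ≤ h t A 0` by `t h t` gives `-A' t = c₁ / h t ≤ A 0 / t`.
-/

theorem image_sub_le_mul_sub_of_hasDerivWithinAt_Ici {f f' : ℝ → ℝ} {a b C : ℝ} (hab : a ≤ b)
    (hf : ∀ x ∈ Ici a, HasDerivWithinAt f (f' x) (Ici a) x) (hf'C : ∀ x ∈ Ioo a b, f' x ≤ C) :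
    f b - f a ≤ C * (b - a) := by
  have hderiv : ∀ x ∈ Ioo a b, HasDerivAt f (f' x) x := fun x hx =>
    (hf x hx.1.le).hasDerivAt (Ici_mem_nhds hx.1)
  refine (convex_Icc a b).image_sub_le_mul_sub_of_deriv_le
    (fun x hx => (hf x hx.1).continuousWithinAt.mono Icc_subset_Ici_self)
    (fun x hx => ?_) (fun x hx => ?_) a (left_mem_Icc.2 hab) b (right_mem_Icc.2 hab) hab
  · rw [interior_Icc] at hx
    exact (hderiv x hx).differentiableAt.differentiableWithinAt
  · rw [interior_Icc] at hx
    exact (hderiv x hx).deriv ▸ hf'C x hx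

theorem stmt_4_general (A h A' : ℝ → ℝ) (c₁ : ℝ) (hc₁ : 0 < c₁)
    (hAder : ∀ t ∈ Ici (0:ℝ), HasDerivWithinAt A (A' t) (Ici 0) t)
    (hApos : ∀ t ∈ Ici (0:ℝ), 0 < A t)
    (hhmono : MonotoneOn h (Ici 0))
    (hh0 : h 0 = 1)
    (heq : ∀ t ∈ Ici (0:ℝ), -A' t * h t = c₁) :
    (∀ t ∈ Ici (0:ℝ), c₁ * t ≤ h t * (A 0 - A t) ∧ h t * (A 0 - A t) ≤ h t * A 0) ∧
    (∀ t : ℝ, 0 < t → -A' t ≤ A 0 / t) := by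
  have hhpos : ∀ t ∈ Ici (0:ℝ), 0 < h t := fun t ht =>
    zero_lt_one.trans_le (hh0 ▸ hhmono self_mem_Ici ht ht : (1:ℝ) ≤ h t)
  have hA' : ∀ t ∈ Ici (0:ℝ), -A' t = c₁ / h t := fun t ht =>
    (eq_div_iff (hhpos t ht).ne').2 (heq t ht)
  have key : ∀ t ∈ Ici (0:ℝ), c₁ * t ≤ h t * (A 0 - A t) := by
    intro t ht
    have hslope : ∀ s ∈ Ioo 0 t, A' s ≤ -(c₁ / h t) := fun s hs => by
      have hs0 : s ∈ Ici (0:ℝ) := hs.1.le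
      rw [le_neg, hA' s hs0]
      exact div_le_div_of_nonneg_left hc₁.le (hhpos s hs0) (hhmono hs0 ht hs.2.le)
    have hmvt := image_sub_le_mul_sub_of_hasDerivWithinAt_Ici ht hAder hslope
    rw [← div_le_iff₀' (hhpos t ht), mul_div_right_comm]
    linarith
  refine ⟨fun t ht => ⟨key t ht, ?_⟩, fun t ht => ?_⟩
  · exact mul_le_mul_of_nonneg_left (by linarith [hApos t ht]) (hhpos t ht).le
  · have ht0 : t ∈ Ici (0:ℝ) := ht.le
    rw [hA' t ht0, div_le_div_iff₀ (hhpos t ht0) ht]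
    nlinarith [key t ht0, hApos t ht0, hhpos t ht0]

/-- If `A` is positive and nonincreasing on `[0, ∞)`, `h` is nondecreasing
there with `h 0 = 1`, both differentiable, and `-A'(t) h(t) = c₁ > 0` for all `t ≥ 0`,
then `c₁ t ≤ h(t) (A(0) - A(t)) ≤ h(t) A(0)` for `t ≥ 0`, and `-A'(t) ≤ A(0) / t`
for `t > 0`. -/
theorem stmt_4 (A h A' h' : ℝ → ℝ) (c₁ : ℝ) (hc₁ : 0 < c₁)
    (hAder : ∀ t ∈ Ici (0:ℝ), HasDerivWithinAt A (A' t) (Ici 0) t)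
    (hhder : ∀ t ∈ Ici (0:ℝ), HasDerivWithinAt h (h' t) (Ici 0) t)
    (hApos : ∀ t ∈ Ici (0:ℝ), 0 < A t)
    (hAmono : AntitoneOn A (Ici 0))
    (hhmono : MonotoneOn h (Ici 0))
    (hh0 : h 0 = 1)
    (heq : ∀ t ∈ Ici (0:ℝ), -A' t * h t = c₁) :
    (∀ t ∈ Ici (0:ℝ), c₁ * t ≤ h t * (A 0 - A t) ∧ h t * (A 0 - A t) ≤ h t * A 0) ∧
    (∀ t : ℝ, 0 < t → -A' t ≤ A 0 / t) :=
  stmt_4_general A h A' c₁ hc₁ hAder hApos hhmono hh0 heq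
end
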